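/- Define Q*(s,a,g) = gᵀ(s + U a)/(1-γ) + γ‖g‖₂/(1-γ)² for orthogonal U ∈ ℝ^{d×d}, γ ∈ (0,1), and let π*(s,g) = Uᵀg/‖g‖₂ for g ≠ 0. Then Q* satisfies the Bellman equation Q*(s,a,g) = gᵀ s' + γ Q*(s', π*(s',g), g), where s' = s + U a. -/

import Mathlib

/-!
Since `U Uᵀ = 1`, the greedy action `π* = Uᵀ g / ‖g‖` moves the state by `g / ‖g‖`, which raises
the reward `⟪g, ·⟫` by exactly `‖g‖`. The Bellman identity is then the scalar identity
`x/(1-γ) + γc/(1-γ)² = x + γ((x + c)/(1-γ) + γc/(1-γ)²)` with `x = ⟪g, s'⟫` and `c = ‖g‖`.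
-/

open RealInnerProductSpace

/-- Identification of `Fin d → ℝ` with Euclidean space `ℝ^d` (with the `ℓ²` norm). -/
noncomputable def toEuc {d : ℕ} (v : Fin d → ℝ) : EuclideanSpace ℝ (Fin d) :=
  (WithLp.equiv 2 (Fin d → ℝ)).symm v

open scoped Matrix

theorem Matrix.mulVec_transpose_mulVec_of_mem_orthogonalGroup {n R : Type*} [Fintype n]
    [DecidableEq n] [CommRing R] {U : Matrix n n R} (hU : U ∈ Matrix.orthogonalGroup n R)
    (v : n → R) : U *ᵥ (Uᵀ *ᵥ v) = v := by
  rw [Matrix.mulVec_mulVec, (Matrix.mem_orthogonalGroup_iff n R).mp hU, Matrix.one_mulVec]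

theorem toEuc_mulVec_smul_toEuc_transpose_mulVec {d : ℕ} {U : Matrix (Fin d) (Fin d) ℝ}
    (hU : U ∈ Matrix.orthogonalGroup (Fin d) ℝ) (c : ℝ) (v : EuclideanSpace ℝ (Fin d)) :
    toEuc (U *ᵥ (c • toEuc (Uᵀ *ᵥ v))) = c • v := by
  simp only [toEuc, WithLp.equiv_symm_apply]
  rw [Matrix.mulVec_smul, Matrix.mulVec_transpose_mulVec_of_mem_orthogonalGroup hU]
  rfl

theorem real_inner_inv_norm_smul_self {E : Type*} [NormedAddCommGroup E] [InnerProductSpace ℝ E]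
    (g : E) : ⟪g, ‖g‖⁻¹ • g⟫ = ‖g‖ := by
  rw [real_inner_smul_right, real_inner_self_eq_norm_sq]
  rcases eq_or_ne ‖g‖ 0 with h | h
  · simp [h]
  · field_simp

theorem div_one_sub_add_mul_div_one_sub_sq_eq_bellman {γ : ℝ} (hγ : γ ≠ 1) (x c : ℝ) :
    x / (1 - γ) + γ * c / (1 - γ) ^ 2 = x + γ * ((x + c) / (1 - γ) + γ * c / (1 - γ) ^ 2) := by
  have : 1 - γ ≠ 0 := sub_ne_zero.mpr hγ.symm
  field_simp
  ring

theorem dense_bellman_fixed_point_general {d : ℕ} (γ : ℝ) (hγ1 : γ < 1)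
    (U : Matrix (Fin d) (Fin d) ℝ) (hU : U ∈ Matrix.orthogonalGroup (Fin d) ℝ)
    (g s a : EuclideanSpace ℝ (Fin d)) :
    ⟪g, s + toEuc (U.mulVec a)⟫ / (1 - γ) + γ * ‖g‖ / (1 - γ) ^ 2 =
      ⟪g, s + toEuc (U.mulVec a)⟫ +
        γ * (⟪g, (s + toEuc (U.mulVec a)) +
              toEuc (U.mulVec (‖g‖⁻¹ • toEuc (U.transpose.mulVec g)))⟫ / (1 - γ) +
            γ * ‖g‖ / (1 - γ) ^ 2) := by
  rw [inner_add_right _ (s + _), toEuc_mulVec_smul_toEuc_transpose_mulVec hU,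
    real_inner_inv_norm_smul_self]
  exact div_one_sub_add_mul_div_one_sub_sq_eq_bellman hγ1.ne _ _

/-- With `Q*(s,a,g) = gᵀ(s+Ua)/(1-γ) + γ‖g‖₂/(1-γ)²` and `π*(s,g) = Uᵀg/‖g‖₂`
(for orthogonal `U`, `γ ∈ (0,1)`, `g ≠ 0`), `Q*` satisfies the Bellman equation
`Q*(s,a,g) = gᵀs' + γ Q*(s', π*(s',g), g)` where `s' = s + Ua`. -/
theorem dense_bellman_fixed_point {d : ℕ} (γ : ℝ) (hγ0 : 0 < γ) (hγ1 : γ < 1)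
    (U : Matrix (Fin d) (Fin d) ℝ) (hU : U ∈ Matrix.orthogonalGroup (Fin d) ℝ)
    (g s a : EuclideanSpace ℝ (Fin d)) (hg : g ≠ 0) (ha : ‖a‖ ≤ 1) :
    ⟪g, s + toEuc (U.mulVec a)⟫ / (1 - γ) + γ * ‖g‖ / (1 - γ) ^ 2 =
      ⟪g, s + toEuc (U.mulVec a)⟫ +
        γ * (⟪g, (s + toEuc (U.mulVec a)) +
              toEuc (U.mulVec (‖g‖⁻¹ • toEuc (U.transpose.mulVec g)))⟫ / (1 - γ) +
            γ * ‖g‖ / (1 - γ) ^ 2) :=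
  dense_bellman_fixed_point_general γ hγ1 U hU g s a
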